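/- arXiv:2408.14926 — 3 statements merged into one kernel-verified Lean document; each statement's English description precedes it below -/
import Mathlib

section
/- Let A ∈ ℝ^{n×n} be symmetric positive definite, B ∈ ℝ^{m×n}, and C ∈ ℝ^{m×m} symmetric positive semi-definite with the Schur complement S := C + B A⁻¹ Bᵀ positive definite. Then every eigenvalue λ of the generalized eigenvalue problem [[A, Bᵀ],[B, -C]] w = λ [[A, 0],[0, S]] w satisfies λ ∈ [-1, (1-√5)/2] ∪ [1, (1+√5)/2]. -/
/-!
Write `w = (x, y)`. The first block row gives `Bᵀy = (λ - 1) A x`, so `y ≠ 0` unless `λ = 1`, and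
testing the second block row against `y` yields `(λ² - λ - 1) s + (λ² - 1) c = 0` with
`s = yᵀ B A⁻¹ Bᵀ y ≥ 0`, `c = yᵀ C y ≥ 0` and `s + c = yᵀ S y > 0`. Hence `λ² - λ - 1` and `λ² - 1`
have opposite signs (or one vanishes), which confines `λ` between consecutive roots `-1 ≤ ψ` or
`1 ≤ φ` of their product.
-/

open Matrix Set

open Real
open scoped goldenRatio

lemma mem_Icc_of_mul_sub_sub_nonpos {K : Type*} [Field K] [LinearOrder K] [IsStrictOrderedRing K]
    {u v x : K} (h : (x - u) * (x - v) ≤ 0) (huv : u ≤ v) : x ∈ Icc u v := by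
  rcases mul_nonpos_iff.1 h with ⟨_, _⟩ | ⟨_, _⟩ <;> constructor <;> linarith

lemma mem_Icc_goldenConj_union_Icc_goldenRatio_of_mul_nonpos {x : ℝ}
    (h : (x ^ 2 - x - 1) * (x ^ 2 - 1) ≤ 0) :
    x ∈ Icc (-1) ψ ∪ Icc 1 φ := by
  have hfactor : (x ^ 2 - x - 1) * (x ^ 2 - 1)
      = ((x - -1) * (x - ψ)) * ((x - 1) * (x - φ)) := by
    linear_combination (x ^ 2 - 1) * (x * goldenRatio_add_goldenConj - goldenRatio_mul_goldenConj)
  rw [hfactor] at h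
  rcases lt_or_ge x 0 with hx | hx
  · have : 0 < (x - 1) * (x - φ) :=
      mul_pos_of_neg_of_neg (by linarith) (by linarith [goldenRatio_pos])
    exact .inl <| mem_Icc_of_mul_sub_sub_nonpos (nonpos_of_mul_nonpos_left h this)
      neg_one_lt_goldenConj.le
  · have : 0 < (x - -1) * (x - ψ) := mul_pos (by linarith) (by linarith [goldenConj_neg])
    exact .inr <| mem_Icc_of_mul_sub_sub_nonpos (nonpos_of_mul_nonpos_right h this)
      one_lt_goldenRatio.le

lemma mul_nonpos_of_mul_add_mul_eq_zero {K : Type*} [Field K] [LinearOrder K]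
    [IsStrictOrderedRing K] {a b s c : K} (hs : 0 ≤ s) (hc : 0 ≤ c) (hsc : 0 < s + c) (h : a * s + b * c = 0) :
    a * b ≤ 0 := by
  have : a * b * (s + c) = -(a ^ 2 * s + b ^ 2 * c) := by linear_combination (a + b) * h
  refine nonpos_of_mul_nonpos_left (this ▸ ?_) hsc
  have := mul_nonneg (sq_nonneg a) hs
  have := mul_nonneg (sq_nonneg b) hc
  linarith

section SaddlePoint

variable {K n m : Type*} [Field K] [Fintype n] [Fintype m]
  {A : Matrix n n K} {B : Matrix m n K} {C S : Matrix m m K} {lam : K} {x : n → K} {y : m → K}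

lemma fromBlocks_saddlePoint_eigen_iff :
    fromBlocks A Bᵀ B (-C) *ᵥ Sum.elim x y = lam • fromBlocks A 0 0 S *ᵥ Sum.elim x y ↔
      A *ᵥ x + Bᵀ *ᵥ y = lam • A *ᵥ x ∧ B *ᵥ x - C *ᵥ y = lam • S *ᵥ y := by
  simp only [fromBlocks_mulVec, Sum.elim_comp_inl, Sum.elim_comp_inr, zero_mulVec, add_zero,
    zero_add, neg_mulVec, ← sub_eq_add_neg, funext_iff, Sum.forall, Pi.smul_apply, Sum.elim_inl,
    Sum.elim_inr]

variable [DecidableEq n]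

lemma ne_zero_of_saddlePoint_eigen (hA : IsUnit A) (hlam : lam ≠ 1) (hxy : Sum.elim x y ≠ 0)
    (h₁ : A *ᵥ x + Bᵀ *ᵥ y = lam • A *ᵥ x) : y ≠ 0 := by
  rintro rfl
  have hAx : A *ᵥ x = A *ᵥ 0 := by
    have : (lam - 1) • A *ᵥ x = 0 := by
      rw [sub_smul, one_smul, ← h₁, mulVec_zero, add_zero, sub_self]
    rw [mulVec_zero, (smul_eq_zero.1 this).resolve_left (sub_ne_zero.2 hlam)]
  exact hxy (by rw [mulVec_injective_iff_isUnit.2 hA hAx, Sum.elim_zero_zero])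

lemma saddlePoint_eigen_quadratic_relation (hA : IsUnit A)
    (h₁ : A *ᵥ x + Bᵀ *ᵥ y = lam • A *ᵥ x)
    (h₂ : B *ᵥ x - C *ᵥ y = lam • (C + B * A⁻¹ * Bᵀ) *ᵥ y) :
    (lam ^ 2 - lam - 1) * (y ⬝ᵥ (B * A⁻¹ * Bᵀ) *ᵥ y) + (lam ^ 2 - 1) * (y ⬝ᵥ C *ᵥ y) = 0 := by
  have hBy : Bᵀ *ᵥ y = (lam - 1) • A *ᵥ x := by
    rw [sub_smul, one_smul, ← h₁]; abel
  have hs : y ⬝ᵥ (B * A⁻¹ * Bᵀ) *ᵥ y = (lam - 1) * (y ⬝ᵥ B *ᵥ x) := by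
    rw [← mulVec_mulVec, ← mulVec_mulVec, hBy, mulVec_smul, mulVec_mulVec,
      nonsing_inv_mul A ((isUnit_iff_isUnit_det A).1 hA), one_mulVec, mulVec_smul,
      dotProduct_smul, smul_eq_mul]
  have h₂y := congrArg (y ⬝ᵥ ·) h₂
  simp only [dotProduct_sub, dotProduct_smul, add_mulVec, dotProduct_add, smul_eq_mul] at h₂y
  linear_combination (-(lam - 1)) * h₂y - hs

end SaddlePoint

/-- Eigenvalues of the block-diagonally preconditioned saddle-point matrix lie in
`[-1, (1-√5)/2] ∪ [1, (1+√5)/2]`. -/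
theorem stmt_0 {n m : ℕ}
    (A : Matrix (Fin n) (Fin n) ℝ) (B : Matrix (Fin m) (Fin n) ℝ)
    (C : Matrix (Fin m) (Fin m) ℝ)
    (hA : A.PosDef) (hC : C.PosSemidef)
    (hS : (C + B * A⁻¹ * Bᵀ).PosDef)
    (lam : ℝ) (w : (Fin n ⊕ Fin m) → ℝ) (hw : w ≠ 0)
    (heig : (Matrix.fromBlocks A Bᵀ B (-C)).mulVec w
      = lam • (Matrix.fromBlocks A 0 0 (C + B * A⁻¹ * Bᵀ)).mulVec w) :
    lam ∈ Set.Icc (-1 : ℝ) ((1 - Real.sqrt 5) / 2) ∪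
      Set.Icc (1 : ℝ) ((1 + Real.sqrt 5) / 2) := by
  by_cases hlam : lam = 1
  · subst hlam
    exact .inr ⟨le_rfl, one_lt_goldenRatio.le⟩
  obtain ⟨x, y, rfl⟩ : ∃ x y, w = Sum.elim x y := ⟨_, _, (Sum.elim_comp_inl_inr w).symm⟩
  obtain ⟨h₁, h₂⟩ := fromBlocks_saddlePoint_eigen_iff.1 heig
  have hy := ne_zero_of_saddlePoint_eigen hA.isUnit hlam hw h₁
  have hs : 0 ≤ y ⬝ᵥ (B * A⁻¹ * Bᵀ) *ᵥ y := by
    simpa [conjTranspose_eq_transpose_of_trivial] using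
      (hA.inv.posSemidef.mul_mul_conjTranspose_same B).dotProduct_mulVec_nonneg y
  have hc : 0 ≤ y ⬝ᵥ C *ᵥ y := by simpa using hC.dotProduct_mulVec_nonneg y
  have hsc : 0 < y ⬝ᵥ (B * A⁻¹ * Bᵀ) *ᵥ y + y ⬝ᵥ C *ᵥ y := by
    simpa [add_mulVec, add_comm] using hS.dotProduct_mulVec_pos hy
  exact mem_Icc_goldenConj_union_Icc_goldenRatio_of_mul_nonpos <|
    mul_nonpos_of_mul_add_mul_eq_zero hs hc hsc <|
      saddlePoint_eigen_quadratic_relation hA.isUnit h₁ h₂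
end

section
/- The n×n tridiagonal matrix T₁ with diagonal entries (2, 2, ..., 2, √2), off-diagonal entries −1 except the last off-diagonal entry −1/√2, is symmetric positive definite. -/
open Matrix

/-- The tridiagonal matrix `T₁` with diagonal `(2, …, 2, √2)`, off-diagonal
entries `−1` except the last off-diagonal entry `−1/√2`. -/
noncomputable def T1 (n : ℕ) : Matrix (Fin n) (Fin n) ℝ :=
  Matrix.of fun i j =>
    if i = j then (if (i : ℕ) = n - 1 then Real.sqrt 2 else 2)
    else if (i : ℕ) + 1 = (j : ℕ) ∨ (j : ℕ) + 1 = (i : ℕ) then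
      (if (i : ℕ) = n - 1 ∨ (j : ℕ) = n - 1 then -(1 / Real.sqrt 2) else -1)
    else 0

/-!
`T₁` has nonpositive off-diagonal entries and nonnegative row sums `rᵢ`, so
`xᵀ T₁ x = ∑ᵢ rᵢ xᵢ² + ∑_{i<j} |tᵢⱼ| (xᵢ - xⱼ)² ≥ 0`.
If this vanishes, `x` is constant along the path `1 — 2 — ⋯ — n` (the superdiagonal has no
zero entry) and vanishes at `n`, whose row sum `√2 - 1/√2` is positive; hence `x = 0`.
-/

open Finset

namespace Matrix

variable {ι : Type*} [Fintype ι]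

theorem dotProduct_mulVec_eq_sum_rowSum_add (A : Matrix ι ι ℝ) (hA : A.IsHermitian)
    (x : ι → ℝ) :
    x ⬝ᵥ A *ᵥ x =
      ∑ i, (∑ j, A i j) * x i ^ 2 + (∑ i, ∑ j, -A i j * (x i - x j) ^ 2) / 2 := by
  have hswap : ∑ i, ∑ j, A i j * x j ^ 2 = ∑ i, (∑ j, A i j) * x i ^ 2 := by
    rw [sum_comm]
    refine sum_congr rfl fun i _ => ?_
    rw [sum_mul]
    refine sum_congr rfl fun j _ => ?_
    rw [← hA.apply i j, star_trivial]
  have hexpand : ∑ i, ∑ j, -A i j * (x i - x j) ^ 2 =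
      2 * (x ⬝ᵥ A *ᵥ x) - ∑ i, (∑ j, A i j) * x i ^ 2 - ∑ i, ∑ j, A i j * x j ^ 2 := by
    simp only [dotProduct, mulVec, mul_sum, sum_mul, ← sum_sub_distrib]
    refine sum_congr rfl fun i _ => sum_congr rfl fun j _ => ?_
    ring
  rw [hexpand, hswap]
  ring

theorem posDef_of_offDiag_nonpos_of_rowSum_nonneg {A : Matrix ι ι ℝ} (hA : A.IsHermitian)
    (hoff : ∀ i j, i ≠ j → A i j ≤ 0) (hrow : ∀ i, 0 ≤ ∑ j, A i j)
    (hconn : ∀ x : ι → ℝ, (∀ i, ∑ j, A i j ≠ 0 → x i = 0) →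
      (∀ i j, A i j ≠ 0 → x i = x j) → x = 0) :
    A.PosDef := by
  refine posDef_iff_dotProduct_mulVec.mpr ⟨hA, fun x hx => ?_⟩
  rw [star_trivial, dotProduct_mulVec_eq_sum_rowSum_add A hA]
  have hdiag : ∀ i, 0 ≤ (∑ j, A i j) * x i ^ 2 := fun i => mul_nonneg (hrow i) (sq_nonneg _)
  have hedge : ∀ i j, 0 ≤ -A i j * (x i - x j) ^ 2 := by
    intro i j
    rcases eq_or_ne i j with rfl | hij
    · simp
    · exact mul_nonneg (neg_nonneg.mpr (hoff i j hij)) (sq_nonneg _)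
  have hdiag_sum := sum_nonneg fun i (_ : i ∈ univ) => hdiag i
  have hedge_sum := sum_nonneg fun i (_ : i ∈ univ) => sum_nonneg fun j (_ : j ∈ univ) => hedge i j
  refine (add_nonneg hdiag_sum (div_nonneg hedge_sum zero_le_two)).lt_of_ne fun hzero => hx ?_
  obtain ⟨hdiag_zero, hedge_zero⟩ :=
    (add_eq_zero_iff_of_nonneg hdiag_sum (div_nonneg hedge_sum zero_le_two)).mp hzero.symm
  rw [sum_eq_zero_iff_of_nonneg fun i _ => hdiag i] at hdiag_zero
  rw [div_eq_zero_iff, sum_eq_zero_iff_of_nonneg fun i _ => sum_nonneg fun j _ => hedge i j]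
    at hedge_zero
  refine hconn x (fun i hi => ?_) (fun i j hij => ?_)
  · exact pow_eq_zero_iff two_ne_zero |>.mp <|
      (mul_eq_zero.mp (hdiag_zero i (mem_univ i))).resolve_left hi
  · have hij_zero := (sum_eq_zero_iff_of_nonneg fun j _ => hedge i j).mp
      (hedge_zero.resolve_right two_ne_zero i (mem_univ i)) j (mem_univ j)
    exact sub_eq_zero.mp <| pow_eq_zero_iff two_ne_zero |>.mp <|
      (mul_eq_zero.mp hij_zero).resolve_left (neg_ne_zero.mpr hij)

end Matrix

theorem Fin.apply_eq_of_apply_last_eq {α : Type*} {m : ℕ} {x : Fin (m + 1) → α} {a : α}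
    (hlast : x (Fin.last m) = a) (hstep : ∀ i : Fin m, x i.castSucc = x i.succ) (i : Fin (m + 1)) :
    x i = a :=
  Fin.reverseInduction hlast (fun i h => (hstep i).trans h) i

theorem Fin.sum_ite_val_eq_add_one {M : Type*} [AddCommMonoid M] {n : ℕ} (i : Fin n) (c : M) :
    ∑ j : Fin n, (if (j : ℕ) = i + 1 then c else 0) = if (i : ℕ) + 1 < n then c else 0 := by
  rw [Fin.sum_univ_eq_sum_range (fun j => if j = (i : ℕ) + 1 then c else 0)]
  simp

theorem Fin.sum_ite_add_one_eq_val {M : Type*} [AddCommMonoid M] {n : ℕ} (i : Fin n) (c : M) :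
    ∑ j : Fin n, (if (j : ℕ) + 1 = i then c else 0) = if 0 < (i : ℕ) then c else 0 := by
  rw [Fin.sum_univ_eq_sum_range (fun j => if j + 1 = (i : ℕ) then c else 0)]
  obtain ⟨_ | k, hk⟩ := i
  · simp
  · simp [show k < n by omega]

theorem T1_isHermitian (n : ℕ) : (T1 n).IsHermitian := by
  ext i j
  simp only [conjTranspose_apply, T1, of_apply, star_trivial, Fin.ext_iff]
  split_ifs <;> first | rfl | omega

theorem T1_apply_nonpos_of_ne (n : ℕ) (i j : Fin n) (hij : i ≠ j) : T1 n i j ≤ 0 := by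
  simp only [T1, of_apply, if_neg hij]
  split_ifs <;> norm_num [Real.sqrt_nonneg]

theorem T1_castSucc_succ_ne_zero (m : ℕ) (i : Fin m) : T1 (m + 1) i.castSucc i.succ ≠ 0 := by
  have hne : i.castSucc ≠ i.succ := Fin.castSucc_lt_succ.ne
  simp only [T1, of_apply, if_neg hne, Fin.val_castSucc, Fin.val_succ, true_or, if_true]
  split_ifs <;> norm_num

theorem T1_apply_eq (n : ℕ) (i j : Fin n) : T1 n i j =
    (if j = i then (if (i : ℕ) + 1 = n then √2 else 2) else 0) +
    (if (j : ℕ) = i + 1 then (if (i : ℕ) + 2 = n then -(1 / √2) else -1) else 0) +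
    (if (j : ℕ) + 1 = i then (if (i : ℕ) + 1 = n then -(1 / √2) else -1) else 0) := by
  have hi := i.isLt
  have hj := j.isLt
  simp only [T1, of_apply, Fin.ext_iff]
  split_ifs <;> first | ring1 | (exfalso; omega)

theorem sum_T1_apply (n : ℕ) (i : Fin n) : ∑ j, T1 n i j =
    (if (i : ℕ) + 1 = n then √2 else 2) +
    (if (i : ℕ) + 1 < n then (if (i : ℕ) + 2 = n then -(1 / √2) else -1) else 0) +
    (if 0 < (i : ℕ) then (if (i : ℕ) + 1 = n then -(1 / √2) else -1) else 0) := by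
  simp only [T1_apply_eq, sum_add_distrib, sum_ite_eq', mem_univ, if_true,
    Fin.sum_ite_val_eq_add_one, Fin.sum_ite_add_one_eq_val]

theorem one_div_sqrt_two_lt_one : 1 / √2 < 1 := by
  rw [div_lt_one (by positivity)]
  exact Real.one_lt_sqrt_two

theorem sum_T1_apply_nonneg (n : ℕ) (i : Fin n) : 0 ≤ ∑ j, T1 n i j := by
  rw [sum_T1_apply]
  split_ifs <;> first | (exfalso; omega) | linarith [Real.one_lt_sqrt_two, one_div_sqrt_two_lt_one]

theorem sum_T1_apply_last_pos (m : ℕ) : 0 < ∑ j, T1 (m + 1) (Fin.last m) j := by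
  simp only [sum_T1_apply, Fin.val_last, lt_self_iff_false, if_true, if_false]
  split_ifs <;> linarith [Real.one_lt_sqrt_two, one_div_sqrt_two_lt_one]

/-- `T₁` is symmetric positive definite. -/
theorem stmt_5 (n : ℕ) : (T1 n).PosDef := by
  refine posDef_of_offDiag_nonpos_of_rowSum_nonneg (T1_isHermitian n) (T1_apply_nonpos_of_ne n)
    (sum_T1_apply_nonneg n) fun x hground hpath => ?_
  cases n with
  | zero => exact Subsingleton.elim _ _
  | succ m =>
    funext i
    exact Fin.apply_eq_of_apply_last_eq (hground _ (sum_T1_apply_last_pos m).ne')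
      (fun i => hpath _ _ (T1_castSucc_succ_ne_zero m i)) i
end

section
/- Let A be symmetric positive definite and S = C + BA⁻¹Bᵀ with C symmetric positive semi-definite. For the preconditioned matrix 𝒫⁻¹𝒜 with 𝒫 = diag(A, S) and 𝒜 = [[A, Bᵀ],[B, −C]], if C = 0 then the eigenvalues of 𝒫⁻¹𝒜 belong to the set {1} ∪ [(1−√5)/2, (1+√5)/2] and more precisely each eigenvalue λ ≠ 1 satisfies λ² − λ − σ = 0 for some σ ∈ [0, 1], where σ is a generalized eigenvalue of (BA⁻¹Bᵀ, S). -/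
open Matrix

section SaddlePoint

variable {m n : Type*} [Fintype m] [Fintype n] [DecidableEq n]

/-- Eliminating `x` through `A⁻¹` turns the block system into
`S y = (λ - 1) λ S y` for the Schur complement `S = B A⁻¹ Bᵀ`. -/
lemma quadratic_smul_schur_mulVec_eq_zero {R : Type*} [CommRing R]
    {A : Matrix n n R} (B : Matrix m n R) (hA : IsUnit A.det) {lam : R}
    {x : n → R} {y : m → R}
    (h1 : A *ᵥ x + Bᵀ *ᵥ y = lam • A *ᵥ x)
    (h2 : B *ᵥ x = lam • (B * A⁻¹ * Bᵀ) *ᵥ y) :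
    (lam ^ 2 - lam - 1) • (B * A⁻¹ * Bᵀ) *ᵥ y = 0 := by
  have hBty : Bᵀ *ᵥ y = (lam - 1) • A *ᵥ x := by
    rw [sub_smul, one_smul, ← h1, add_sub_cancel_left]
  have hSy : (B * A⁻¹ * Bᵀ) *ᵥ y = ((lam - 1) * lam) • (B * A⁻¹ * Bᵀ) *ᵥ y := by
    calc (B * A⁻¹ * Bᵀ) *ᵥ y = B *ᵥ A⁻¹ *ᵥ Bᵀ *ᵥ y := by
          rw [mulVec_mulVec, mulVec_mulVec]
      _ = (lam - 1) • B *ᵥ x := by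
          rw [hBty, mulVec_smul, mulVec_smul, mulVec_mulVec x, nonsing_inv_mul _ hA,
            one_mulVec]
      _ = ((lam - 1) * lam) • (B * A⁻¹ * Bᵀ) *ᵥ y := by rw [h2, smul_smul]
  rw [show lam ^ 2 - lam - 1 = (lam - 1) * lam - 1 by ring, sub_smul, one_smul, ← hSy,
    sub_self]

lemma eq_zero_of_mulVec_eq_smul_mulVec {K : Type*} [Field K] {A : Matrix n n K}
    (hA : A.det ≠ 0) {lam : K} (hlam : lam ≠ 1) {x : n → K} (h : A *ᵥ x = lam • A *ᵥ x) :
    x = 0 := by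
  have hAx : (lam - 1) • A *ᵥ x = 0 := by rw [sub_smul, one_smul, ← h, sub_self]
  exact eq_zero_of_mulVec_eq_zero hA ((smul_eq_zero.mp hAx).resolve_left (sub_ne_zero.mpr hlam))

end SaddlePoint

lemma mem_Icc_of_sq_sub_self_le_one {t : ℝ} (h : t ^ 2 - t ≤ 1) :
    t ∈ Set.Icc ((1 - √5) / 2) ((1 + √5) / 2) := by
  have h5 : √5 ^ 2 = 5 := Real.sq_sqrt (by norm_num)
  have h5n : 0 ≤ √5 := Real.sqrt_nonneg 5
  constructor <;> nlinarith [sq_nonneg (2 * t - 1 + √5), sq_nonneg (2 * t - 1 - √5)]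

/-- Eigenvalue characterization for the preconditioned saddle-point matrix in
the case `C = 0`: with `S = B A⁻¹ Bᵀ` positive definite, any generalized
eigenvalue `λ` either equals 1 or satisfies `λ² − λ − σ = 0` for some
`σ ∈ [0,1]` which is a generalized eigenvalue of `(B A⁻¹ Bᵀ, S)`; hence
`λ ∈ {1} ∪ [(1−√5)/2, (1+√5)/2]`. -/
theorem stmt_19 {n m : ℕ}
    (A : Matrix (Fin n) (Fin n) ℝ) (B : Matrix (Fin m) (Fin n) ℝ)
    (hA : A.PosDef) (hS : (B * A⁻¹ * Bᵀ).PosDef)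
    (lam : ℝ) (x : Fin n → ℝ) (y : Fin m → ℝ)
    (hxy : ¬(x = 0 ∧ y = 0))
    (h1 : A.mulVec x + Bᵀ.mulVec y = lam • A.mulVec x)
    (h2 : B.mulVec x = lam • (B * A⁻¹ * Bᵀ).mulVec y) :
    (lam ≠ 1 → ∃ σ ∈ Set.Icc (0 : ℝ) 1,
        lam ^ 2 - lam - σ = 0 ∧
        (B * A⁻¹ * Bᵀ).mulVec y = σ • (B * A⁻¹ * Bᵀ).mulVec y) ∧
      lam ∈ insert (1 : ℝ)
        (Set.Icc ((1 - Real.sqrt 5) / 2) ((1 + Real.sqrt 5) / 2)) := by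
  have hdet : A.det ≠ 0 := hA.det_pos.ne'
  have hquad := quadratic_smul_schur_mulVec_eq_zero B hdet.isUnit h1 h2
  have key : lam ≠ 1 → lam ^ 2 - lam - 1 = 0 := fun hlam ↦ by
    have hy : y ≠ 0 := by
      rintro rfl
      refine hxy ⟨eq_zero_of_mulVec_eq_smul_mulVec hdet hlam ?_, rfl⟩
      simpa using h1
    have hSy : (B * A⁻¹ * Bᵀ) *ᵥ y ≠ 0 := fun h ↦ hy (eq_zero_of_mulVec_eq_zero hS.det_pos.ne' h)
    exact (smul_eq_zero.mp hquad).resolve_right hSy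
  refine ⟨fun hlam ↦ ⟨1, ⟨zero_le_one, le_rfl⟩, key hlam, (one_smul _ _).symm⟩, ?_⟩
  rcases eq_or_ne lam 1 with rfl | hlam
  · exact Set.mem_insert _ _
  · exact Set.mem_insert_of_mem _ (mem_Icc_of_sq_sub_self_le_one (by linarith [key hlam]))
end
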